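/- Unitary speed limit via Fisher information: if ρ evolves as dρ/dt = −(i/ℏ)[H, ρ] for Hermitian H, and X is any Hermitian operator, then |Tr[X dρ/dt]| ≤ (1/ℏ)·√(F_ρ(H))·√(V_ρ(X)), where F_ρ(H) is the SLD Fisher information and V_ρ(X) the variance of X in ρ. -/

import Mathlib

open Matrix in
/-- SLD Fisher information in the eigenbasis of `ρ = ∑ p i |i⟩⟨i|`. -/
noncomputable def sldFisher {d : ℕ} (p : Fin d → ℝ) (H : Matrix (Fin d) (Fin d) ℂ) : ℝ :=
  ∑ i, ∑ j, 2 * (p i - p j) ^ 2 / (p i + p j) * Complex.normSq (H i j)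

open Matrix in
/-- Variance `V_ρ(X) = Tr[ρX²] − (Tr[ρX])²`. -/
noncomputable def qVar {d : ℕ} (ρ X : Matrix (Fin d) (Fin d) ℂ) : ℝ :=
  ((ρ * X * X).trace).re - (((ρ * X).trace).re) ^ 2

/-! Write `ρ = diag p` and `Y = X - ⟨X⟩_ρ`. A commutator is traceless, so
`Tr[X[H,ρ]] = Tr[Y[H,ρ]] = ∑ᵢⱼ Hᵢⱼ Yⱼᵢ (pⱼ - pᵢ)`. Splitting
`|pⱼ - pᵢ| = √(2(pᵢ-pⱼ)²/(pᵢ+pⱼ)) · √((pᵢ+pⱼ)/2)`, Cauchy–Schwarz bounds this by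
`√F_ρ(H) · √(∑ᵢⱼ (pᵢ+pⱼ)/2 |Yⱼᵢ|²)`, and for Hermitian `Y` the last sum symmetrizes to
`Tr[ρY²] = V_ρ(X)`. -/

open Matrix Finset

theorem Complex.norm_sum_mul_mul_ofReal_le_sqrt_mul_sqrt {ι : Type*} (s : Finset ι) (a b : ι → ℂ)
    (w u : ι → ℝ) (hu : ∀ k ∈ s, 0 < u k) :
    ‖∑ k ∈ s, a k * b k * (w k : ℂ)‖ ≤
      √(∑ k ∈ s, w k ^ 2 / u k * Complex.normSq (a k)) *
        √(∑ k ∈ s, u k * Complex.normSq (b k)) := by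
  have hsplit : ∀ k ∈ s,
      ‖a k * b k * (w k : ℂ)‖ = (|w k| / √(u k) * ‖a k‖) * (√(u k) * ‖b k‖) := by
    intro k hk
    have : √(u k) ≠ 0 := (Real.sqrt_pos.2 (hu k hk)).ne'
    rw [norm_mul, norm_mul, Complex.norm_real, Real.norm_eq_abs]
    field_simp
  have hsq_left : ∀ k ∈ s,
      (|w k| / √(u k) * ‖a k‖) ^ 2 = w k ^ 2 / u k * Complex.normSq (a k) := by
    intro k hk
    rw [mul_pow, div_pow, sq_abs, Real.sq_sqrt (hu k hk).le, Complex.sq_norm]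
  have hsq_right : ∀ k ∈ s, (√(u k) * ‖b k‖) ^ 2 = u k * Complex.normSq (b k) := by
    intro k hk
    rw [mul_pow, Real.sq_sqrt (hu k hk).le, Complex.sq_norm]
  calc ‖∑ k ∈ s, a k * b k * (w k : ℂ)‖
      ≤ ∑ k ∈ s, ‖a k * b k * (w k : ℂ)‖ := norm_sum_le _ _
    _ = ∑ k ∈ s, (|w k| / √(u k) * ‖a k‖) * (√(u k) * ‖b k‖) := sum_congr rfl hsplit
    _ ≤ √(∑ k ∈ s, (|w k| / √(u k) * ‖a k‖) ^ 2) * √(∑ k ∈ s, (√(u k) * ‖b k‖) ^ 2) :=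
      Real.sum_mul_le_sqrt_mul_sqrt _ _ _
    _ = _ := by rw [sum_congr rfl hsq_left, sum_congr rfl hsq_right]

namespace Matrix

variable {n : Type*} [Fintype n] [DecidableEq n]

theorem trace_mul_commutator_diagonal {R : Type*} [CommRing R] (q : n → R) (H M : Matrix n n R) :
    (M * (H * diagonal q - diagonal q * H)).trace = ∑ i, ∑ j, H i j * M j i * (q j - q i) := by
  have hentry : ∀ i j, (H * diagonal q - diagonal q * H) i j = H i j * (q j - q i) := by
    intro i j
    simp only [sub_apply, mul_diagonal, diagonal_mul]
    ring
  rw [trace_mul_comm]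
  simp only [trace, diag_apply, mul_apply, hentry]
  exact sum_congr rfl fun i _ => sum_congr rfl fun j _ => by ring

theorem trace_sub_smul_one_mul_commutator {R : Type*} [CommRing R] (c : R) (M A B : Matrix n n R) :
    ((M - c • 1) * (A * B - B * A)).trace = (M * (A * B - B * A)).trace := by
  rw [sub_mul, smul_mul, one_mul, trace_sub, trace_smul, trace_sub, trace_mul_comm A B, sub_self,
    smul_zero, sub_zero]

omit [Fintype n] [DecidableEq n] in
theorem IsHermitian.normSq_apply_comm {A : Matrix n n ℂ} (hA : A.IsHermitian) (i j : n) :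
    Complex.normSq (A j i) = Complex.normSq (A i j) := by
  rw [← hA.apply i j, Complex.star_def, Complex.normSq_conj]

theorem IsHermitian.re_trace_diagonal_mul_mul_self (p : n → ℝ) {A : Matrix n n ℂ}
    (hA : A.IsHermitian) :
    (diagonal (fun i => (p i : ℂ)) * A * A).trace.re =
      ∑ i, ∑ j, (p i + p j) / 2 * Complex.normSq (A j i) := by
  have hmoment : (diagonal (fun i => (p i : ℂ)) * A * A).trace.re =
      ∑ i, ∑ j, p i * Complex.normSq (A i j) := by
    simp only [trace, diag_apply, mul_apply, diagonal_apply, ite_mul, zero_mul, sum_ite_eq,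
      mem_univ, if_true, Complex.re_sum]
    refine sum_congr rfl fun i _ => sum_congr rfl fun j _ => ?_
    rw [← hA.apply j i, Complex.star_def, mul_assoc, Complex.mul_conj, ← Complex.ofReal_mul,
      Complex.ofReal_re]
  have hswap : ∑ i, ∑ j, p j * Complex.normSq (A j i) = ∑ i, ∑ j, p i * Complex.normSq (A i j) :=
    sum_comm
  have htranspose :
      ∑ i, ∑ j, p i * Complex.normSq (A j i) = ∑ i, ∑ j, p i * Complex.normSq (A i j) := by
    simp only [hA.normSq_apply_comm]
  calc _ = ∑ i, ∑ j, p i * Complex.normSq (A i j) := hmoment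
    _ = (∑ i, ∑ j, p i * Complex.normSq (A j i) + ∑ i, ∑ j, p j * Complex.normSq (A j i)) / 2 := by
      rw [htranspose, hswap]
      ring
    _ = _ := by
      simp only [← sum_add_distrib, sum_div]
      exact sum_congr rfl fun i _ => sum_congr rfl fun j _ => by ring

end Matrix

theorem qVar_eq_re_trace_mul_centered_mul_centered {d : ℕ} (ρ X : Matrix (Fin d) (Fin d) ℂ)
    (hρ : ρ.trace = 1) :
    qVar ρ X = (ρ * (X - (((ρ * X).trace.re : ℝ) : ℂ) • 1) *
      (X - (((ρ * X).trace.re : ℝ) : ℂ) • 1)).trace.re := by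
  set c : ℝ := (ρ * X).trace.re with hc
  have hexpand : ρ * (X - (c : ℂ) • 1) * (X - (c : ℂ) • 1) =
      ρ * X * X - (2 * c : ℂ) • (ρ * X) + (c ^ 2 : ℂ) • ρ := by
    simp only [Matrix.mul_sub, Matrix.sub_mul, Matrix.mul_smul, Matrix.smul_mul, Matrix.mul_one]
    module
  rw [hexpand, trace_add, trace_sub, trace_smul, trace_smul, hρ, qVar, ← hc]
  simp only [smul_eq_mul, mul_one, Complex.add_re, Complex.sub_re]
  rw [← Complex.ofReal_ofNat, ← Complex.ofReal_mul, Complex.re_ofReal_mul, ← Complex.ofReal_pow,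
    Complex.ofReal_re, ← hc]
  ring

theorem norm_sum_mul_sub_le_sqrt_sldFisher_mul_sqrt {d : ℕ} (p : Fin d → ℝ)
    (hp : ∀ i, 0 < p i) (H Y : Matrix (Fin d) (Fin d) ℂ) :
    ‖∑ i, ∑ j, H i j * Y j i * ((p j : ℂ) - p i)‖ ≤
      √(sldFisher p H) * √(∑ i, ∑ j, (p i + p j) / 2 * Complex.normSq (Y j i)) := by
  have hu : ∀ k ∈ (univ : Finset (Fin d × Fin d)), 0 < (p k.1 + p k.2) / 2 :=
    fun k _ => half_pos (add_pos (hp k.1) (hp k.2))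
  have hCS := Complex.norm_sum_mul_mul_ofReal_le_sqrt_mul_sqrt univ (fun k => H k.1 k.2)
    (fun k => Y k.2 k.1) (fun k => p k.2 - p k.1) _ hu
  simp only [Fintype.sum_prod_type, Complex.ofReal_sub] at hCS
  convert hCS using 3
  refine sum_congr rfl fun i _ => sum_congr rfl fun j _ => ?_
  have : p i + p j ≠ 0 := (add_pos (hp i) (hp j)).ne'
  field_simp
  ring

open Matrix in
theorem unitary_speed_limit_general {d : ℕ} (p : Fin d → ℝ)
    (hp : ∀ i, 0 < p i) (hsum : ∑ i, p i = 1)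
    (H X : Matrix (Fin d) (Fin d) ℂ) (hX : X.IsHermitian)
    (ℏ : ℝ) (hℏ : 0 < ℏ) :
    ‖(X * ((-(Complex.I / (ℏ : ℂ))) •
        (H * Matrix.diagonal (fun i => (p i : ℂ)) -
          Matrix.diagonal (fun i => (p i : ℂ)) * H))).trace‖ ≤
      (1 / ℏ) * Real.sqrt (sldFisher p H) *
        Real.sqrt (qVar (Matrix.diagonal fun i => (p i : ℂ)) X) := by
  set ρ : Matrix (Fin d) (Fin d) ℂ := diagonal fun i => (p i : ℂ)
  set Y := X - (((ρ * X).trace.re : ℝ) : ℂ) • 1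
  have hY : Y.IsHermitian := hX.sub (isHermitian_one.smul (Complex.conj_ofReal _))
  have hρ : ρ.trace = 1 := by
    simp only [ρ, trace_diagonal]
    exact_mod_cast hsum
  have hℏnorm : ‖-(Complex.I / (ℏ : ℂ))‖ = 1 / ℏ := by simp [abs_of_pos hℏ]
  rw [Matrix.mul_smul, trace_smul, smul_eq_mul, norm_mul, hℏnorm, mul_assoc,
    ← trace_sub_smul_one_mul_commutator (((ρ * X).trace.re : ℝ) : ℂ),
    trace_mul_commutator_diagonal, qVar_eq_re_trace_mul_centered_mul_centered ρ X hρ,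
    hY.re_trace_diagonal_mul_mul_self]
  gcongr
  exact norm_sum_mul_sub_le_sqrt_sldFisher_mul_sqrt p hp H Y

open Matrix in
/-- Unitary speed limit via Fisher information: for the unitary time derivative
`dρ/dt = −(i/ℏ)[H,ρ]` (with `ρ = diagonal p` in its eigenbasis) and any
Hermitian `X`, `|Tr[X dρ/dt]| ≤ (1/ℏ)√(F_ρ(H))√(V_ρ(X))`. -/
theorem unitary_speed_limit {d : ℕ} (p : Fin d → ℝ)
    (hp : ∀ i, 0 < p i) (hsum : ∑ i, p i = 1)
    (H X : Matrix (Fin d) (Fin d) ℂ) (hH : H.IsHermitian) (hX : X.IsHermitian)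
    (ℏ : ℝ) (hℏ : 0 < ℏ) :
    ‖(X * ((-(Complex.I / (ℏ : ℂ))) •
        (H * Matrix.diagonal (fun i => (p i : ℂ)) -
          Matrix.diagonal (fun i => (p i : ℂ)) * H))).trace‖ ≤
      (1 / ℏ) * Real.sqrt (sldFisher p H) *
        Real.sqrt (qVar (Matrix.diagonal fun i => (p i : ℂ)) X) :=
  unitary_speed_limit_general p hp hsum H X hX ℏ hℏ
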